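/- arXiv:2301.05030 — 4 statements merged into one kernel-verified Lean document; each statement's English description precedes it below -/
import Mathlib

section
/- Let R be a commutative ring with 1 and f(x) = a_0 + a_1 x + ... + a_n x^n a polynomial of degree n over R. Suppose {r_1, ..., r_n} is an n-tuple of f, i.e., f(r_i) = 0 for all i and r_i - r_j is neither zero nor a zero divisor for i ≠ j. Then for each 0 ≤ i ≤ n-1, a_i = (-1)^{n-i} a_n · e_{n-i}(r_1, ..., r_n), where e_k denotes the k-th elementary symmetric polynomial, and consequently f(x) = a_n · ∏_{i=1}^{n} (x - r_i) in R[x]. -/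
/-!
Dividing out one root `r a` at a time, every other `r i` stays a root of the quotient because
`r i - r a` is a non-zero-divisor; hence the monic polynomial `∏ (X - r i)` of degree `n` divides
`f`. As `deg f ≤ n`, the quotient is the constant `a_n`, and Vieta's formulas for the coefficients
of `∏ (X - r i)` give the rest.
-/

open Polynomial Finset
open scoped nonZeroDivisors

section

variable {R : Type*} [CommRing R]

theorem eval_eq_zero_of_eval_X_sub_C_mul_eq_zero {a b : R} {g : R[X]} (hab : b - a ∈ R⁰)
    (h : ((X - C a) * g).eval b = 0) : g.eval b = 0 := by
  rwa [eval_mul, eval_sub, eval_X, eval_C, mul_left_mem_nonZeroDivisors_eq_zero_iff hab] at h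

theorem prod_X_sub_C_dvd_of_eval_eq_zero {ι : Type*} (s : Finset ι) (r : ι → R) {f : R[X]}
    (hroot : ∀ i ∈ s, f.eval (r i) = 0)
    (hdiff : (s : Set ι).Pairwise fun i j => r i - r j ∈ R⁰) :
    ∏ i ∈ s, (X - C (r i)) ∣ f := by
  classical
  induction s using Finset.induction_on generalizing f with
  | empty => simp
  | insert a s ha ih =>
    obtain ⟨g, rfl⟩ := dvd_iff_isRoot.mpr (hroot a (mem_insert_self a s))
    have hg : ∀ i ∈ s, g.eval (r i) = 0 := fun i hi =>
      eval_eq_zero_of_eval_X_sub_C_mul_eq_zero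
        (hdiff (by simp [hi]) (by simp) (ne_of_mem_of_not_mem hi ha))
        (hroot i (mem_insert_of_mem hi))
    rw [prod_insert ha]
    exact mul_dvd_mul_left _ (ih hg (hdiff.mono (by simp)))

theorem Finset.prod_X_sub_C_coeff {ι : Type*} (s : Finset ι) (r : ι → R) {k : ℕ} (hk : k ≤ #s) :
    (∏ i ∈ s, (X - C (r i))).coeff k = (-1) ^ (#s - k) * (s.val.map r).esymm (#s - k) := by
  have hprod : ∏ i ∈ s, (X - C (r i)) = ((s.val.map r).map fun t => X - C t).prod := by
    rw [Finset.prod_eq_multiset_prod, Multiset.map_map]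
    rfl
  rw [hprod, Multiset.prod_X_sub_C_coeff _ (by simpa using hk), Multiset.card_map, card_val]

end

/-- Generalized relations between roots and coefficients: if a polynomial `f` of degree at most
`n` over a commutative ring admits an `n`-tuple `r 1, …, r n` of roots (pairwise differences
nonzero non-zero-divisors), then each lower coefficient is `(-1)^(n-i)` times the leading
coefficient times the elementary symmetric polynomial `e_{n-i}(r)`, and consequently
`f = a_n * ∏ (X - r i)`. -/
theorem polynomial_coeff_eq_esymm_of_tuple
    {R : Type*} [CommRing R] (n : ℕ)
    (f : Polynomial R) (hf : f.natDegree ≤ n)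
    (r : Fin n → R)
    (hroot : ∀ i : Fin n, f.eval (r i) = 0)
    (hdiff : ∀ i j : Fin n, i ≠ j → r i - r j ≠ 0 ∧ r i - r j ∈ nonZeroDivisors R) :
    (∀ i : ℕ, i < n →
      f.coeff i = (-1) ^ (n - i) * f.coeff n * (Finset.univ.val.map r).esymm (n - i)) ∧
    f = Polynomial.C (f.coeff n) * ∏ i : Fin n, (Polynomial.X - Polynomial.C (r i)) := by
  nontriviality R
  set P := ∏ i : Fin n, (X - C (r i))
  have hdvd : P ∣ f := prod_X_sub_C_dvd_of_eval_eq_zero univ r (fun i _ => hroot i)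
    fun i _ j _ hij => (hdiff i j hij).2
  have hcoeff : ∀ i ≤ n, P.coeff i = (-1) ^ (n - i) * (univ.val.map r).esymm (n - i) :=
    fun i hi => by simpa using Finset.prod_X_sub_C_coeff univ r (k := i) (by simpa using hi)
  have hfP : f = C f.leadingCoeff * P :=
    eq_leadingCoeff_mul_of_monic_of_dvd_of_natDegree_le (monic_prod_of_monic _ _ fun i _ =>
      monic_X_sub_C (r i)) hdvd (by simpa [P] using hf)
  have hlead : f.coeff n = f.leadingCoeff := by
    conv_lhs => rw [hfP]
    simp [coeff_C_mul, hcoeff n le_rfl, Multiset.esymm]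
  refine ⟨fun i hi => ?_, hlead ▸ hfP⟩
  conv_lhs => rw [hfP]
  rw [coeff_C_mul, hcoeff i hi.le, hlead]
  ring
end

section
/- Let R be a nonzero commutative ring with 1 and f(x) = a_0 + a_1 x + ... + a_m x^m a polynomial over R. Suppose R has an n-tuple {r_1, ..., r_n} of f with n > m, and suppose 1 belongs to the ideal of R generated by a_0, a_1, ..., a_m. Then R = 0, a contradiction; equivalently, under these hypotheses no nonzero ring R exists (i.e., if 1 ∈ (a_0,...,a_m) and f has an n-tuple with n > deg f, then R must be the zero ring). -/
open Polynomial

lemma poly_eq_zero_of_roots {R : Type*} [CommRing R] :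
    ∀ (n : ℕ) (f : Polynomial R) (_ : f.natDegree < n) (r : Fin n → R)
      (_ : ∀ i, f.eval (r i) = 0)
      (_ : ∀ i j, i ≠ j → r i - r j ∈ nonZeroDivisors R), f = 0 := by
  intro n
  induction n with
  | zero => intro f hdeg; omega
  | succ n ih =>
    intro f hdeg r hroot hdiff
    by_cases hf0 : f = 0
    · exact hf0
    · have h0 : f.IsRoot (r 0) := hroot 0
      obtain ⟨g, hg⟩ := (dvd_iff_isRoot).2 h0
      have hgroot : ∀ i : Fin n, g.eval (r i.succ) = 0 := by
        intro i
        have h := hroot i.succ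
        rw [hg, eval_mul, eval_sub, eval_X, eval_C] at h
        have hnzd := hdiff i.succ 0 (Fin.succ_ne_zero i)
        exact (mul_left_mem_nonZeroDivisors_eq_zero_iff hnzd).mp h
      have hg0 : g = 0 := by
        by_cases hgz : g = 0
        · exact hgz
        · have hnt : Nontrivial R := by
            by_contra h
            rw [not_nontrivial_iff_subsingleton] at h
            exact hgz (Subsingleton.elim g 0)
          have hmul : f.natDegree = 1 + g.natDegree := by
            rw [hg, (monic_X_sub_C (r 0)).natDegree_mul' hgz, natDegree_X_sub_C]
          apply ih g (by omega) (fun i => r i.succ) hgroot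
          intro i j hij
          exact hdiff i.succ j.succ (by simpa using hij)
      rw [hg, hg0, mul_zero]

/-- Vanishing ring condition: if a nonzero commutative ring `R` has a polynomial `f` of degree
at most `m` admitting an `n`-tuple of roots with `n > m` (pairwise differences nonzero
non-zero-divisors) and `1` lies in the ideal generated by the coefficients of `f`, then we
reach a contradiction (so such a ring must be the zero ring). -/
theorem no_nontrivial_ring_with_tuple_and_unit_ideal
    {R : Type*} [CommRing R] [Nontrivial R] (m n : ℕ) (hnm : n > m)
    (f : Polynomial R) (hf : f.natDegree ≤ m)
    (r : Fin n → R)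
    (hroot : ∀ i : Fin n, f.eval (r i) = 0)
    (hdiff : ∀ i j : Fin n, i ≠ j → r i - r j ≠ 0 ∧ r i - r j ∈ nonZeroDivisors R)
    (hone : (1 : R) ∈ Ideal.span (f.coeff '' {i : ℕ | i ≤ m})) :
    False := by
  have hf0 : f = 0 :=
    poly_eq_zero_of_roots n f (by omega) r hroot (fun i j h => (hdiff i j h).2)
  rw [hf0] at hone
  have : (0 : Polynomial R).coeff '' {i : ℕ | i ≤ m} ⊆ {0} := by
    rintro x ⟨i, -, rfl⟩; simp
  have h1 : (1 : R) ∈ Ideal.span ({0} : Set R) :=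
    Ideal.span_mono this hone
  rw [Ideal.span_singleton_eq_bot.mpr rfl] at h1
  exact one_ne_zero (Ideal.mem_bot.mp h1)
end

section
/- Let R be a commutative ring with 1 possessing an n-tuple {t_1, ..., t_n} (pairwise differences non-zero-divisors). Let α_i denote the column vector (t_1^i, ..., t_n^i)^T. For any indices 0 ≤ i_1 < i_2 < ... < i_{n-1}, the determinant det(α_0, α_{i_1}, ..., α_{i_{n-1}}) is divisible in R by the Vandermonde determinant det(α_0, α_1, ..., α_{n-1}) = ∏_{1 ≤ j < i ≤ n}(t_i - t_j). -/
open MvPolynomial Finset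

section Aux

variable {σ : Type*} [DecidableEq σ]

/-- substitution replacing `X i` by `X j`. -/
noncomputable def substXX (i j : σ) : MvPolynomial σ ℤ →ₐ[ℤ] MvPolynomial σ ℤ :=
  aeval (fun k => if k = i then X j else X k)

lemma substXX_X (i j k : σ) :
    substXX i j (X k) = if k = i then X j else X k := by
  simp [substXX]

lemma substXX_dvd_sub (i j : σ) (f : MvPolynomial σ ℤ) :
    (X i - X j : MvPolynomial σ ℤ) ∣ f - substXX i j f := by
  induction f using MvPolynomial.induction_on with
  | C a => simp [substXX]
  | add p q hp hq =>
      have : p + q - substXX i j (p + q) = (p - substXX i j p) + (q - substXX i j q) := by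
        rw [map_add]; ring
      rw [this]; exact dvd_add hp hq
  | mul_X p k hp =>
      have : p * X k - substXX i j (p * X k)
          = (p - substXX i j p) * X k + substXX i j p * (X k - substXX i j (X k)) := by
        rw [map_mul]; ring
      rw [this]
      refine dvd_add (Dvd.dvd.mul_right hp _) (Dvd.dvd.mul_left ?_ _)
      rw [substXX_X]
      by_cases h : k = i
      · subst h; simp
      · simp [h]

lemma substXX_self (i j : σ) (hij : i ≠ j) :
    substXX i j (X i - X j : MvPolynomial σ ℤ) = 0 := by
  rw [map_sub, substXX_X, substXX_X, if_pos rfl, if_neg (Ne.symm hij), sub_self]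

lemma substXX_eq_zero_iff (i j : σ) (hij : i ≠ j) (f : MvPolynomial σ ℤ) :
    substXX i j f = 0 ↔ (X i - X j : MvPolynomial σ ℤ) ∣ f := by
  constructor
  · intro h
    have := substXX_dvd_sub i j f
    rwa [h, sub_zero] at this
  · rintro ⟨g, rfl⟩
    rw [map_mul, substXX_self i j hij, zero_mul]

lemma X_sub_X_prime (i j : σ) (hij : i ≠ j) :
    Prime (X i - X j : MvPolynomial σ ℤ) := by
  refine ⟨?_, ?_, ?_⟩
  · intro h
    have := substXX_self i j hij
    rw [h, map_zero] at this
    -- fine, contradiction comes from X i - X j = 0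
    have : (X i : MvPolynomial σ ℤ) = X j := by
      have := sub_eq_zero.mp h
      exact this
    exact hij (MvPolynomial.X_injective this)
  · intro h
    have h0 : IsUnit (substXX i j (X i - X j)) := h.map (substXX i j)
    rw [substXX_self i j hij] at h0
    exact not_isUnit_zero h0
  · intro a b hab
    rw [← substXX_eq_zero_iff i j hij] at hab
    rw [map_mul] at hab
    rcases mul_eq_zero.mp hab with h | h
    · exact Or.inl ((substXX_eq_zero_iff i j hij a).mp h)
    · exact Or.inr ((substXX_eq_zero_iff i j hij b).mp h)

lemma prod_primes_dvd_of_dvd {α : Type*} [CommRing α] [IsDomain α] {ι : Type*}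
    (s : Finset ι) (p : ι → α) (a : α)
    (hp : ∀ i ∈ s, Prime (p i))
    (hnd : ∀ i ∈ s, ∀ j ∈ s, i ≠ j → ¬ (p i ∣ p j))
    (hd : ∀ i ∈ s, p i ∣ a) :
    (∏ i ∈ s, p i) ∣ a := by
  classical
  induction s using Finset.induction_on generalizing a with
  | empty => simp
  | @insert k s hk ih =>
      obtain ⟨b, rfl⟩ := hd k (mem_insert_self k s)
      rw [prod_insert hk]
      have hrest : (∏ i ∈ s, p i) ∣ b := by
        apply ih
        · intro i hi; exact hp i (mem_insert_of_mem hi)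
        · intro i hi j hj hij; exact hnd i (mem_insert_of_mem hi) j (mem_insert_of_mem hj) hij
        · intro i hi
          rcases (hp i (mem_insert_of_mem hi)).2.2 _ _ (hd i (mem_insert_of_mem hi)) with h | h
          · exact absurd h (hnd i (mem_insert_of_mem hi) k (mem_insert_self k s)
              (fun h' => hk (h' ▸ hi)))
          · exact h
      exact mul_dvd_mul_left _ hrest

end Aux

/-- If `t 1, …, t (n+1)` form a tuple of `R` (pairwise differences nonzero non-zero-divisors)
and `0 ≤ i₁ < i₂ < ⋯ < iₙ` are exponents, then the determinant of the matrix with columns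
`α₀, α_{i₁}, …, α_{iₙ}` (where `α_k = (t 1 ^ k, …, t (n+1) ^ k)ᵀ`) is divisible in `R` by the
Vandermonde determinant `det (α₀, α₁, …, αₙ) = ∏_{j < i} (t i - t j)`. -/
theorem vandermonde_det_dvd_generalized_vandermonde_det
    {R : Type*} [CommRing R] (n : ℕ) (t : Fin (n + 1) → R)
    (ht : ∀ i j : Fin (n + 1), i ≠ j → t i - t j ≠ 0 ∧ t i - t j ∈ nonZeroDivisors R)
    (e : Fin n → ℕ) (he : StrictMono e) :
    (Matrix.vandermonde t).det ∣
      (Matrix.of fun (i j : Fin (n + 1)) =>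
        t i ^ (Fin.cases 0 e j : ℕ)).det := by
  classical
  set f : Fin (n + 1) → ℕ := Fin.cases 0 e with hf
  -- work universally in A := MvPolynomial (Fin (n+1)) ℤ
  set A := MvPolynomial (Fin (n + 1)) ℤ
  set M : Matrix (Fin (n + 1)) (Fin (n + 1)) A :=
    Matrix.of fun i j => (X i : A) ^ (f j) with hM
  -- each X j - X i (i ≠ j) divides M.det
  have key : ∀ i j : Fin (n + 1), i ≠ j → ((X j - X i : A)) ∣ M.det := by
    intro i j hij
    rw [← substXX_eq_zero_iff j i (Ne.symm hij)]
    rw [AlgHom.map_det]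
    apply Matrix.det_zero_of_row_eq hij
    funext k
    simp [Matrix.map_apply, hM, substXX_X, hij]
  -- indexing set of pairs i < j
  set s : Finset ((_ : Fin (n + 1)) × Fin (n + 1)) :=
    Finset.univ.sigma (fun i => Finset.Ioi i) with hs
  have hmem : ∀ x : ((_ : Fin (n + 1)) × Fin (n + 1)), x ∈ s ↔ x.1 < x.2 := by
    intro x; simp [hs, Finset.mem_sigma]
  have hprod : (∏ x ∈ s, ((X x.2 - X x.1 : A))) ∣ M.det := by
    apply prod_primes_dvd_of_dvd
    · intro x hx
      exact X_sub_X_prime _ _ (ne_of_gt ((hmem x).mp hx))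
    · intro x hx y hy hxy hdvd
      have hx' := (hmem x).mp hx
      have hy' := (hmem y).mp hy
      have h0 : substXX x.2 x.1 ((X y.2 - X y.1 : A)) = 0 := by
        rw [← substXX_eq_zero_iff x.2 x.1 (ne_of_gt hx')] at hdvd
        exact hdvd
      rw [map_sub, substXX_X, substXX_X] at h0
      have hXne : ∀ a b : Fin (n + 1), a ≠ b → (X a : A) - X b ≠ 0 := by
        intro a b hab h
        exact hab (MvPolynomial.X_injective (sub_eq_zero.mp h))
      by_cases h2 : y.2 = x.2 <;> by_cases h1 : y.1 = x.2
      · exact (ne_of_gt hy') (h2.trans h1.symm)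
      · rw [if_pos h2, if_neg h1] at h0
        have : y.1 ≠ x.1 := by
          intro h
          apply hxy
          have : y = ⟨x.1, x.2⟩ := by
            cases y; cases x
            simp_all
          simp [this]
        exact hXne _ _ this.symm h0
      · rw [if_neg h2, if_pos h1] at h0
        have : y.2 ≠ x.1 := by
          intro h
          have := hx'.trans (h1 ▸ hy')
          rw [h] at this
          exact lt_irrefl _ this
        exact hXne _ _ this h0
      · rw [if_neg h2, if_neg h1] at h0
        exact hXne _ _ (ne_of_gt hy') h0
    · intro x hx
      exact key _ _ (ne_of_gt ((hmem x).mp hx)).symm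
  -- map down to R via aeval t
  have hmap := map_dvd (MvPolynomial.aeval t : A →ₐ[ℤ] R) hprod
  rw [map_prod] at hmap
  have hdetmap : (MvPolynomial.aeval t : A →ₐ[ℤ] R) M.det
      = (Matrix.of fun (i j : Fin (n + 1)) => t i ^ (f j)).det := by
    rw [AlgHom.map_det]
    congr 1
    funext i j
    simp [hM, Matrix.map_apply]
  rw [hdetmap] at hmap
  have hvdm : (Matrix.vandermonde t).det = ∏ x ∈ s, (t x.2 - t x.1) := by
    rw [Matrix.det_vandermonde, Finset.prod_sigma]
  rw [hvdm]
  have hpe : (∏ x ∈ s, (t x.2 - t x.1))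
      = ∏ x ∈ s, (MvPolynomial.aeval t : A →ₐ[ℤ] R) ((X x.2 - X x.1 : A)) := by
    refine Finset.prod_congr rfl fun x _ => ?_
    simp
  rw [hpe]
  exact hmap
end

section
/- Let R be a complete local commutative ring with maximal ideal m, and let α(x) ∈ R⟦x⟧ satisfy α(x) ≡ a_n x^n mod (m, x^{n+1}) with a_n a unit. Then there is a unique factorization α(x) = ε(x)·g(x) with ε(x) a unit of R⟦x⟧ and g(x) a monic polynomial of degree n all of whose lower coefficients lie in m. -/
/-!
The hypotheses say exactly that the reduction of `α` modulo `m` is a nonzero power series of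
order `n`. Hence Mathlib's Weierstrass preparation (`PowerSeries.exists_isWeierstrassFactorization`,
unique by `PowerSeries.IsWeierstrassFactorization.elim`) applies, and its distinguished polynomial
has degree equal to that order.
-/

open IsLocalRing PowerSeries

theorem Polynomial.isDistinguishedAt_iff_of_degree_eq {R : Type*} [CommRing R] {f : Polynomial R}
    {I : Ideal R} {n : ℕ} (hdeg : f.degree = n) :
    f.IsDistinguishedAt I ↔ f.Monic ∧ ∀ i < n, f.coeff i ∈ I := by
  rw [← Polynomial.natDegree_eq_of_degree_eq_some hdeg]
  exact ⟨fun h ↦ ⟨h.monic, fun _ hi ↦ h.mem hi⟩, fun ⟨hm, hmem⟩ ↦ ⟨⟨hmem _⟩, hm⟩⟩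

theorem PowerSeries.order_map_residue_eq {R : Type*} [CommRing R] [IsLocalRing R] {n : ℕ}
    {α : PowerSeries R} (hlow : ∀ i < n, coeff i α ∈ maximalIdeal R)
    (hunit : IsUnit (coeff n α)) :
    (α.map (residue R)).order = n := by
  rw [order_eq_nat]
  simp only [coeff_map, residue_ne_zero_iff_isUnit, residue_eq_zero_iff]
  exact ⟨hunit, hlow⟩

/-- Weierstrass preparation theorem: if `R` is a local commutative ring, complete with respect
to its maximal ideal `m`, and `α ∈ R⟦x⟧` satisfies `α ≡ aₙ xⁿ mod (m, x^(n+1))` with `aₙ` a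
unit, then there is a unique factorization `α = ε · g` with `ε` a unit of `R⟦x⟧` and `g` a
monic polynomial of degree `n` all of whose lower coefficients lie in `m`. -/
theorem weierstrass_preparation
    {R : Type*} [CommRing R] [IsLocalRing R]
    [IsAdicComplete (IsLocalRing.maximalIdeal R) R]
    (n : ℕ) (α : PowerSeries R)
    (hlow : ∀ i : ℕ, i < n → PowerSeries.coeff i α ∈ IsLocalRing.maximalIdeal R)
    (hunit : IsUnit (PowerSeries.coeff n α)) :
    ∃! p : PowerSeries R × Polynomial R,
      IsUnit p.1 ∧ p.2.Monic ∧ p.2.degree = n ∧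
      (∀ i : ℕ, i < n → p.2.coeff i ∈ IsLocalRing.maximalIdeal R) ∧
      α = p.1 * (p.2 : PowerSeries R) := by
  have horder := order_map_residue_eq hlow hunit
  have hne : α.map (residue R) ≠ 0 := order_finite_iff_ne_zero.mp (by simp [horder])
  obtain ⟨g, ε, H⟩ := exists_isWeierstrassFactorization hne
  have hdeg : g.degree = n := by
    rw [Polynomial.degree_eq_natDegree H.isDistinguishedAt.monic.ne_zero,
      H.natDegree_eq_toNat_order_map, horder, ENat.toNat_natCast]
  obtain ⟨hmonic, hmem⟩ :=
    (Polynomial.isDistinguishedAt_iff_of_degree_eq hdeg).mp H.isDistinguishedAt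
  refine ⟨(ε, g), ⟨H.isUnit, hmonic, hdeg, hmem, H.eq_mul.trans (mul_comm _ _)⟩, ?_⟩
  rintro ⟨ε', g'⟩ ⟨hε', hmonic', hdeg', hmem', heq'⟩
  have H' : α.IsWeierstrassFactorization g' ε' :=
    ⟨(Polynomial.isDistinguishedAt_iff_of_degree_eq hdeg').mpr ⟨hmonic', hmem'⟩, hε',
      heq'.trans (mul_comm _ _)⟩
  obtain ⟨rfl, rfl⟩ := H'.elim H
  rfl
end
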